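/- Let q be a symmetric bilinear form of signature (1,n) on V with n ≥ 1, and let z ∈ V with q(z,z) = 0, z ≠ 0, such that z lies in the closure of a component P of the positive cone {x : q(x,x) > 0}. Then q(x,z) > 0 for all x ∈ P. -/
import Mathlib


/-- `q` is a symmetric bilinear form of signature `(1, n)` on `V`: in some linear
coordinates it is `x₀ y₀ - x₁ y₁ - ⋯ - x_n y_n`. -/
def IsLorentzian {V : Type*} [AddCommGroup V] [Module ℝ V] (n : ℕ)
    (q : V →ₗ[ℝ] V →ₗ[ℝ] ℝ) : Prop :=
  ∃ e : V ≃ₗ[ℝ] (Fin (n + 1) → ℝ), ∀ x y : V,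
    q x y = e x 0 * e y 0 - ∑ i : Fin n, e x i.succ * e y i.succ

set_option maxHeartbeats 1000000 in
/-- If `z ≠ 0` is isotropic and lies in the closure of a connected component `P` of the
positive cone, then `q(x,z) > 0` for all `x ∈ P`. -/
theorem stmt5 {V : Type*} [NormedAddCommGroup V] [NormedSpace ℝ V]
    (n : ℕ) (hn : 1 ≤ n) (q : V →ₗ[ℝ] V →ₗ[ℝ] ℝ) (hq : IsLorentzian n q)
    (z x₀ : V) (hz0 : q z z = 0) (hz : z ≠ 0) (hx₀ : 0 < q x₀ x₀)
    (hcl : z ∈ closure (connectedComponentIn {v : V | 0 < q v v} x₀)) :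
    ∀ x ∈ connectedComponentIn {v : V | 0 < q v v} x₀, 0 < q x z := by
  obtain ⟨e, he⟩ := hq
  have hfd : FiniteDimensional ℝ V :=
    FiniteDimensional.of_injective (e : V →ₗ[ℝ] (Fin (n+1) → ℝ)) e.injective
  set C := connectedComponentIn {v : V | 0 < q v v} x₀ with hCdef
  have hx₀C : x₀ ∈ C := mem_connectedComponentIn hx₀
  have hCsub : C ⊆ {v : V | 0 < q v v} := connectedComponentIn_subset _ _
  have hCconn : IsPreconnected C := by
    rw [hCdef]
    exact (isConnected_connectedComponentIn_iff.mpr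
      (show x₀ ∈ {v : V | 0 < q v v} from hx₀)).isPreconnected
  -- the coordinate function
  set f : V → ℝ := fun v => e v 0 with hfdef
  have hfcont : Continuous f := by
    have h1 : Continuous (e : V →ₗ[ℝ] (Fin (n+1) → ℝ)) :=
      LinearMap.continuous_of_finiteDimensional _
    exact (continuous_apply 0).comp h1
  -- f is nonzero on the cone
  have hne : ∀ v : V, 0 < q v v → f v ≠ 0 := by
    intro v hv hfv
    have := he v v
    rw [hfdef] at hfv
    have hsum : (0:ℝ) ≤ ∑ i : Fin n, e v i.succ * e v i.succ :=
      Finset.sum_nonneg fun i _ => mul_self_nonneg _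
    simp only [hfv] at this
    nlinarith
  -- sign normalization
  set ε : ℝ := if 0 < f x₀ then 1 else -1 with hεdef
  have hε2 : ε * ε = 1 := by
    rw [hεdef]; split <;> norm_num
  set g : V → ℝ := fun v => ε * f v with hgdef
  have hgcont : Continuous g := continuous_const.mul hfcont
  have hgx₀ : 0 < g x₀ := by
    rcases lt_trichotomy (f x₀) 0 with h | h | h
    · have : ¬ 0 < f x₀ := by linarith
      simp only [hgdef, hεdef, this, if_false]; nlinarith
    · exact absurd h (hne x₀ hx₀)
    · simp only [hgdef, hεdef, h, if_true]; nlinarith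
  have hεne : ε ≠ 0 := by rw [hεdef]; split <;> norm_num
  -- g is positive on C
  have hgpos : ∀ v ∈ C, 0 < g v := by
    intro v hv
    by_contra hle
    push_neg at hle
    have hgvne : g v ≠ 0 := fun h => (hne v (hCsub hv))
      (by rcases mul_eq_zero.mp h with h' | h' <;> [exact absurd h' hεne; exact h'])
    have hgv : g v < 0 := lt_of_le_of_ne hle hgvne
    have := hCconn.intermediate_value hv hx₀C (hgcont.continuousOn)
    have h0 : (0:ℝ) ∈ Set.Icc (g v) (g x₀) := ⟨le_of_lt hgv, le_of_lt hgx₀⟩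
    obtain ⟨w, hwC, hw⟩ := this h0
    exact (hne w (hCsub hwC))
      (by rcases mul_eq_zero.mp hw with h' | h' <;> [exact absurd h' hεne; exact h'])
  -- g z ≥ 0
  have hgz_nonneg : 0 ≤ g z := by
    have hsub : C ⊆ g ⁻¹' Set.Ici 0 := fun v hv => le_of_lt (hgpos v hv)
    have : closure C ⊆ g ⁻¹' Set.Ici 0 :=
      closure_minimal hsub (isClosed_Ici.preimage hgcont)
    exact this hcl
  -- f z ≠ 0, since otherwise z = 0
  have hfz : f z ≠ 0 := by
    intro hfz0
    have hqzz := he z z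
    rw [hz0] at hqzz
    simp only [hfdef] at hfz0
    rw [hfz0] at hqzz
    have hsum : ∑ i : Fin n, e z i.succ * e z i.succ = 0 := by nlinarith
    have hcoord : ∀ i : Fin n, e z i.succ = 0 := by
      intro i
      have := Finset.sum_eq_zero_iff_of_nonneg
        (fun i _ => mul_self_nonneg (e z i.succ)) |>.mp hsum i (Finset.mem_univ i)
      nlinarith [this]
    have hez : e z = 0 := by
      funext j
      refine Fin.cases ?_ ?_ j
      · exact hfz0
      · intro i; exact hcoord i
    apply hz
    have := congrArg e.symm hez
    simpa using this
  have hgz : 0 < g z := by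
    rcases lt_or_eq_of_le hgz_nonneg with h | h
    · exact h
    · exact absurd (mul_eq_zero.mp h.symm) (by push_neg; exact ⟨hεne, hfz⟩)
  -- main argument
  intro x hx
  have hgx : 0 < g x := hgpos x hx
  have hqx := hCsub hx
  have hqxx := he x x
  have hqzz := he z z
  rw [hz0] at hqzz
  have hqxz := he x z
  -- translate everything
  have hA : ∑ i : Fin n, e x i.succ * e x i.succ < f x * f x := by
    have h1 : 0 < q x x := hqx
    simp only [hfdef]; linarith [hqxx, h1]
  have hB : ∑ i : Fin n, e z i.succ * e z i.succ = f z * f z := by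
    simp only [hfdef]; linarith [hqzz]
  have hfxz : f x * f z = g x * g z := by
    have h2 : g x * g z = (ε * ε) * (f x * f z) := by simp only [hgdef]; ring
    rw [h2, hε2, one_mul]
  have hS2 : (∑ i : Fin n, e x i.succ * e z i.succ) ^ 2 ≤
      (∑ i : Fin n, e x i.succ * e x i.succ) * (∑ i : Fin n, e z i.succ * e z i.succ) := by
    have := Finset.sum_mul_sq_le_sq_mul_sq Finset.univ
      (fun i : Fin n => e x i.succ) (fun i : Fin n => e z i.succ)
    simpa [sq] using this
  rw [hqxz]
  have hAnn : 0 ≤ ∑ i : Fin n, e x i.succ * e x i.succ :=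
    Finset.sum_nonneg fun i _ => mul_self_nonneg _
  have hBnn : 0 ≤ ∑ i : Fin n, e z i.succ * e z i.succ :=
    Finset.sum_nonneg fun i _ => mul_self_nonneg _
  have hfx' : f x = e x 0 := rfl
  have hfz' : f z = e z 0 := rfl
  have habpos : 0 < e x 0 * e z 0 := by
    rw [← hfx', ← hfz', hfxz]; exact mul_pos hgx hgz
  have hbne : e z 0 ≠ 0 := by
    intro h; rw [h, mul_zero] at habpos; exact lt_irrefl _ habpos
  have hbb : 0 < e z 0 * e z 0 := mul_self_pos.mpr hbne
  have hB' : ∑ i : Fin n, e z i.succ * e z i.succ = e z 0 * e z 0 := by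
    rw [← hfz']; exact hB
  have hA' : ∑ i : Fin n, e x i.succ * e x i.succ < e x 0 * e x 0 := by
    rw [← hfx']; exact hA
  have hABlt : (∑ i : Fin n, e x i.succ * e x i.succ) *
      (∑ i : Fin n, e z i.succ * e z i.succ) < (e x 0 * e x 0) * (e z 0 * e z 0) := by
    rw [hB']
    exact mul_lt_mul_of_pos_right hA' hbb
  set S := ∑ i : Fin n, e x i.succ * e z i.succ with hSdef
  have hSlt : S ^ 2 < (e x 0 * e z 0) ^ 2 := by nlinarith [hS2, hABlt]
  nlinarith [hSlt, habpos]
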